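/- In any orthomodular lattice, if a commutes with b and a commutes with c (where a commutes with b means a = (a∩b)∪(a∩b')), then a ∩ (b∪c) = (a∩b) ∪ (a∩c). -/

import Mathlib

/-- An ortholattice as an algebra ⟨α, ', ∪, ∩⟩ with join `j` and
orthocomplement `c` primitive, and meet defined by De Morgan. -/
structure OrthoLattice (α : Type*) where
  j : α → α → α
  c : α → α
  j_comm : ∀ a b, j a b = j b a
  j_assoc : ∀ a b d, j (j a b) d = j a (j b d)
  c_invol : ∀ a, c (c a) = a
  j_top : ∀ a b, j a (j b (c b)) = j b (c b)
  absorb : ∀ a b, j a (c (j (c a) (c b))) = a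

namespace OrthoLattice

variable {α : Type*}

/-- meet: a ∩ b = (a' ∪ b')' -/
def m (L : OrthoLattice α) (a b : α) : α := L.c (L.j (L.c a) (L.c b))

/-- the unit 1 = a ∪ a' -/
def one (L : OrthoLattice α) (a : α) : α := L.j a (L.c a)

/-- quantum equivalence a ≡ b = (a∩b) ∪ (a'∩b') -/
def equiv (L : OrthoLattice α) (a b : α) : α := L.j (L.m a b) (L.m (L.c a) (L.c b))

/-- classical equivalence a ≡₀ b = (a'∪b) ∩ (a∪b') -/
def equiv0 (L : OrthoLattice α) (a b : α) : α := L.m (L.j (L.c a) b) (L.j a (L.c b))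

/-- Sasaki hook a →₁ b = a' ∪ (a ∩ b) -/
def sasaki (L : OrthoLattice α) (a b : α) : α := L.j (L.c a) (L.m a b)

end OrthoLattice

/-!
Put `e = (a ⊓ b) ⊔ (a ⊓ c) ≤ f = a ⊓ (b ⊔ c)`. By orthomodularity `f = e ⊔ (f ⊓ eᶜ)`, so it
suffices that `g = f ⊓ eᶜ` is the least element. Since `a` commutes with `b`, orthomodularity
gives `a ⊓ (a ⊓ b)ᶜ = a ⊓ bᶜ`, whence `g ≤ bᶜ`; likewise `g ≤ cᶜ`. So `g` lies below both
`b ⊔ c` and its complement.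
-/

/-- The least element is encoded by `inf_compl_le`, so no `BoundedOrder` (hence no inhabitant of
`α`) is required. -/
class OrthomodularLattice (α : Type*) extends Lattice α, Compl α where
  compl_compl (a : α) : aᶜᶜ = a
  compl_le_compl {a b : α} : a ≤ b → bᶜ ≤ aᶜ
  inf_compl_le (a b : α) : a ⊓ aᶜ ≤ b
  sup_inf_compl_of_le {a b : α} : a ≤ b → a ⊔ b ⊓ aᶜ = b

namespace OrthomodularLattice

variable {α : Type*} [OrthomodularLattice α] {a b c p q : α}

def Commutes (a b : α) : Prop := a = a ⊓ b ⊔ a ⊓ bᶜ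

theorem le_compl_comm : a ≤ bᶜ ↔ b ≤ aᶜ :=
  ⟨fun h => compl_compl b ▸ compl_le_compl h, fun h => compl_compl a ▸ compl_le_compl h⟩

theorem le_compl_sup (ha : c ≤ aᶜ) (hb : c ≤ bᶜ) : c ≤ (a ⊔ b)ᶜ :=
  le_compl_comm.2 (sup_le (le_compl_comm.1 ha) (le_compl_comm.1 hb))

theorem le_of_le_of_le_compl (ha : c ≤ a) (hac : c ≤ aᶜ) : c ≤ b :=
  (le_inf ha hac).trans (inf_compl_le a b)

theorem sup_inf_compl_of_le_compl (h : q ≤ pᶜ) : (p ⊔ q) ⊓ pᶜ = q := by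
  set y := (p ⊔ q) ⊓ pᶜ
  have hqy : q ≤ y := le_inf le_sup_right h
  -- `y ⊓ qᶜ` lies below both `p ⊔ q` and `(p ⊔ q)ᶜ`, so it is the least element
  have hyq : y ⊓ qᶜ ≤ q := le_of_le_of_le_compl (inf_le_left.trans inf_le_left)
    (le_compl_sup (inf_le_left.trans inf_le_right) inf_le_right)
  rw [← sup_inf_compl_of_le hqy, sup_eq_left.2 hyq]

theorem Commutes.inf_compl_inf (h : Commutes a b) : a ⊓ (a ⊓ b)ᶜ = a ⊓ bᶜ := by
  have h' : a ⊓ bᶜ ≤ (a ⊓ b)ᶜ := inf_le_right.trans (compl_le_compl inf_le_right)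
  exact (congrArg (· ⊓ (a ⊓ b)ᶜ) h).trans (sup_inf_compl_of_le_compl h')

theorem Commutes.inf_sup_eq (hb : Commutes a b) (hc : Commutes a c) :
    a ⊓ (b ⊔ c) = a ⊓ b ⊔ a ⊓ c := by
  set e := a ⊓ b ⊔ a ⊓ c
  set g := a ⊓ (b ⊔ c) ⊓ eᶜ
  have hga : g ≤ a := inf_le_left.trans inf_le_left
  have hgb : g ≤ bᶜ := calc
    g ≤ a ⊓ (a ⊓ b)ᶜ := le_inf hga (inf_le_right.trans (compl_le_compl le_sup_left))
    _ = a ⊓ bᶜ := hb.inf_compl_inf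
    _ ≤ bᶜ := inf_le_right
  have hgc : g ≤ cᶜ := calc
    g ≤ a ⊓ (a ⊓ c)ᶜ := le_inf hga (inf_le_right.trans (compl_le_compl le_sup_right))
    _ = a ⊓ cᶜ := hc.inf_compl_inf
    _ ≤ cᶜ := inf_le_right
  have hge : g ≤ e :=
    le_of_le_of_le_compl (inf_le_left.trans inf_le_right) (le_compl_sup hgb hgc)
  rw [← sup_inf_compl_of_le le_inf_sup, sup_eq_left.2 hge]

end OrthomodularLattice

namespace OrthoLattice

variable {α : Type*} (L : OrthoLattice α)

theorem m_j_self (a b : α) : L.m a (L.j a b) = a := by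
  simpa only [m, c_invol] using congrArg L.c (L.absorb (L.c a) (L.c b))

theorem m_comm (a b : α) : L.m a b = L.m b a := by
  rw [m, m, j_comm]

theorem m_assoc (a b d : α) : L.m (L.m a b) d = L.m a (L.m b d) := by
  simp only [m, c_invol, j_assoc]

abbrev toLattice : Lattice α :=
  letI : Max α := ⟨L.j⟩
  letI : Min α := ⟨L.m⟩
  Lattice.mk' L.j_comm L.j_assoc L.m_comm L.m_assoc L.absorb L.m_j_self

theorem j_c_eq_of_j_eq {a b : α} (h : L.j a b = b) : L.j (L.c b) (L.c a) = L.c a :=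
  calc L.j (L.c b) (L.c a) = L.c (L.m a b) := by rw [m, c_invol, j_comm]
    _ = L.c a := by rw [← h, m_j_self]

abbrev toOrthomodularLattice
    (hOM : ∀ a b : α, L.j a (L.m (L.c a) (L.j a b)) = L.j a b) : OrthomodularLattice α where
  toLattice := L.toLattice
  compl := L.c
  compl_compl := L.c_invol
  compl_le_compl := L.j_c_eq_of_j_eq
  inf_compl_le a b := by
    show L.j (L.m a (L.c a)) b = b
    simpa only [m, c_invol] using L.j_c_eq_of_j_eq (L.j_top (L.c b) (L.c a))
  sup_inf_compl_of_le {a b} (h : L.j a b = b) := by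
    show L.j a (L.m b (L.c a)) = b
    simpa only [h, m_comm] using hOM a b

end OrthoLattice

/-- in any orthomodular lattice, if a commutes with b and with c
then a ∩ (b∪c) = (a∩b) ∪ (a∩c). -/
theorem stmt18 {α : Type*} (L : OrthoLattice α)
    (hOM : ∀ a b : α, L.j a (L.m (L.c a) (L.j a b)) = L.j a b) :
    ∀ a b d : α,
      a = L.j (L.m a b) (L.m a (L.c b)) →
      a = L.j (L.m a d) (L.m a (L.c d)) →
      L.m a (L.j b d) = L.j (L.m a b) (L.m a d) := by
  let := L.toOrthomodularLattice hOM
  intro a b d hb hd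
  exact OrthomodularLattice.Commutes.inf_sup_eq hb hd
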